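/- arXiv:2204.08416 — 2 statements merged into one kernel-verified Lean document; each statement's English description precedes it below -/
import Mathlib

section
/- For simple graphs G and H and vertices u ∈ V(G), v ∈ V(H), the number of triangles in G × H incident to the vertex (u,v) equals 2 · t_G(u) · t_H(v), where t_G(u) denotes the number of triangles of G incident to u. -/
variable {α β : Type*}

/-- Tensor (categorical) product of simple graphs. -/
def tensorProdG (G : SimpleGraph α) (H : SimpleGraph β) : SimpleGraph (α × β) where
  Adj x y := G.Adj x.1 y.1 ∧ H.Adj x.2 y.2
  symm := ⟨fun _ _ h => ⟨h.1.symm, h.2.symm⟩⟩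
  loopless := ⟨fun x h => G.loopless.irrefl x.1 h.1⟩

instance (G : SimpleGraph α) (H : SimpleGraph β) [DecidableRel G.Adj] [DecidableRel H.Adj] :
    DecidableRel (tensorProdG G H).Adj := fun _ _ => instDecidableAnd

/-- Number of triangles incident to `u`: edges of the induced neighborhood. -/
noncomputable def triCount (G : SimpleGraph α) [Fintype α] (u : α) : ℕ :=
  Nat.card (SimpleGraph.induce (G.neighborSet u) G).edgeSet

/-- Local clustering coefficient. -/
noncomputable def locCc (G : SimpleGraph α) [Fintype α] [DecidableRel G.Adj] (u : α) : ℝ :=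
  if 2 ≤ G.degree u then (triCount G u : ℝ) / ((G.degree u).choose 2) else 0

/-- Global clustering coefficient. -/
noncomputable def globCc (G : SimpleGraph α) [Fintype α] [DecidableRel G.Adj] : ℝ :=
  (∑ v, locCc G v) / (Fintype.card α)

/-- Minimum degree of the induced neighborhood of `u`. -/
noncomputable def nbrMinDeg (G : SimpleGraph α) [Fintype α] [DecidableRel G.Adj] (u : α) : ℕ :=
  (SimpleGraph.induce (G.neighborSet u) G).minDegree

/-- Average degree, as a real number. -/
noncomputable def avgDeg (G : SimpleGraph α) [Fintype α] [DecidableRel G.Adj] : ℝ :=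
  (∑ v, (G.degree v : ℝ)) / (Fintype.card α)

/-! The neighbourhood of `(u, v)` in `G × H` is `N(u) × N(v)`, and the graph it induces is the
tensor product of the graphs induced on `N(u)` and `N(v)`. It remains to count the edges of a
tensor product, which is easiest through darts: a dart of `G × H` is exactly a pair of darts, one
of `G` and one of `H`, so `2 e(G × H) = 2 e(G) · 2 e(H)`. The surviving factor `2` records the
two ways of matching the endpoints of an edge of `G` with those of an edge of `H`. -/

theorem SimpleGraph.natCard_dart_eq_twice_natCard_edgeSet {V : Type*} [Finite V]
    (G : SimpleGraph V) : Nat.card G.Dart = 2 * Nat.card G.edgeSet := by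
  classical
  have := Fintype.ofFinite V
  rw [Nat.card_eq_fintype_card, Nat.card_eq_fintype_card, SimpleGraph.card_edgeSet,
    SimpleGraph.dart_card_eq_twice_card_edges]

namespace tensorProdG

theorem neighborSet_eq (G : SimpleGraph α) (H : SimpleGraph β) (u : α) (v : β) :
    (tensorProdG G H).neighborSet (u, v) = G.neighborSet u ×ˢ H.neighborSet v :=
  rfl

def dartEquiv (G : SimpleGraph α) (H : SimpleGraph β) :
    (tensorProdG G H).Dart ≃ G.Dart × H.Dart where
  toFun d := (⟨(d.fst.1, d.snd.1), d.adj.1⟩, ⟨(d.fst.2, d.snd.2), d.adj.2⟩)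
  invFun p := ⟨((p.1.fst, p.2.fst), (p.1.snd, p.2.snd)), ⟨p.1.adj, p.2.adj⟩⟩
  left_inv _ := rfl
  right_inv _ := rfl

theorem natCard_edgeSet [Finite α] [Finite β] (G : SimpleGraph α) (H : SimpleGraph β) :
    Nat.card (tensorProdG G H).edgeSet = 2 * Nat.card G.edgeSet * Nat.card H.edgeSet := by
  have hdart := Nat.card_congr (dartEquiv G H)
  rw [Nat.card_prod, SimpleGraph.natCard_dart_eq_twice_natCard_edgeSet,
    SimpleGraph.natCard_dart_eq_twice_natCard_edgeSet,
    SimpleGraph.natCard_dart_eq_twice_natCard_edgeSet] at hdart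
  linarith

def induceProdIso (G : SimpleGraph α) (H : SimpleGraph β) (s : Set α) (t : Set β) :
    (tensorProdG G H).induce (s ×ˢ t) ≃g tensorProdG (G.induce s) (H.induce t) where
  toEquiv := Equiv.Set.prod s t
  map_rel_iff' := Iff.rfl

end tensorProdG

variable [Fintype α] [Fintype β] (G : SimpleGraph α) (H : SimpleGraph β)
  [DecidableRel G.Adj] [DecidableRel H.Adj]

theorem tensor_triCount (u : α) (v : β) :
    triCount (tensorProdG G H) (u, v) = 2 * triCount G u * triCount H v := by
  rw [triCount, tensorProdG.neighborSet_eq,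
    Nat.card_congr (tensorProdG.induceProdIso G H _ _).mapEdgeSet, tensorProdG.natCard_edgeSet,
    triCount, triCount]
end

section
/- Let G be a strongly regular graph with parameters (n₁, d_G, μ₁^G, μ₂^G) and H a strongly regular graph with parameters (n₂, d_H, μ₁^H, μ₂^H), with d_G, d_H ≥ 2. Then Cc(G × H) = μ₁^G · μ₁^H / (d_G · d_H − 1). -/
variable {α β : Type*}

/-! A regular graph of degree `d ≥ 2` in which every edge lies in exactly `μ` triangles has
`d * μ / 2` triangles at each vertex (handshake lemma in its neighbourhood, where every degree
is `μ`), hence every local clustering coefficient, and so the global one, equals `μ / (d - 1)`.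
The tensor product of graphs regular of degrees `dG`, `dH` whose edges lie in `μG`, `μH`
triangles is of this kind with `d = dG * dH` and `μ = μG * μH`, because neighbourhoods and
common neighbourhoods in `G × H` are products of those in `G` and `H`. -/

section ClusteringOfEdgeRegular

variable {γ : Type*} (G : SimpleGraph γ)

theorem card_neighborSet_induce_neighborSet (x : γ) (w : G.neighborSet x) :
    Nat.card ((G.induce (G.neighborSet x)).neighborSet w) = Nat.card (G.commonNeighbors x w) :=
  Nat.card_congr
    { toFun := fun z => ⟨z.1, z.1.2, z.2⟩
      invFun := fun z => ⟨⟨z, z.2.1⟩, z.2.2⟩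
      left_inv := fun _ => rfl
      right_inv := fun _ => rfl }

theorem two_mul_triCount [Fintype γ] [DecidableRel G.Adj] {x : γ} {μ : ℕ}
    (h : ∀ w, G.Adj x w → Nat.card (G.commonNeighbors x w) = μ) :
    2 * triCount G x = G.degree x * μ := by
  have hdeg : ∀ w : G.neighborSet x, (G.induce (G.neighborSet x)).degree w = μ := fun w => by
    rw [← h w w.2, ← card_neighborSet_induce_neighborSet, Nat.card_eq_fintype_card,
      SimpleGraph.card_neighborSet_eq_degree]
  have hsum := (G.induce (G.neighborSet x)).sum_degrees_eq_twice_card_edges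
  simp only [hdeg, Finset.sum_const, Finset.card_univ, smul_eq_mul,
    SimpleGraph.card_neighborSet_eq_degree] at hsum
  rw [triCount, Nat.card_eq_fintype_card, ← SimpleGraph.edgeFinset_card, ← hsum]

theorem locCc_eq_of_card_commonNeighbors [Fintype γ] [DecidableRel G.Adj] {x : γ} {μ : ℕ}
    (hx : 2 ≤ G.degree x) (h : ∀ w, G.Adj x w → Nat.card (G.commonNeighbors x w) = μ) :
    locCc G x = μ / (G.degree x - 1) := by
  have htri : (triCount G x : ℝ) = G.degree x * μ / 2 := by
    rw [eq_div_iff two_ne_zero, mul_comm]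
    exact_mod_cast two_mul_triCount G h
  have hd : (G.degree x : ℝ) ≠ 0 := by positivity
  have hd1 : (G.degree x : ℝ) - 1 ≠ 0 := by
    have : (2 : ℝ) ≤ G.degree x := by exact_mod_cast hx
    linarith
  rw [locCc, if_pos hx, htri, Nat.cast_choose_two]
  field_simp

theorem globCc_eq_of_isRegularOfDegree [Fintype γ] [Nonempty γ] [DecidableRel G.Adj] {d μ : ℕ}
    (hreg : G.IsRegularOfDegree d) (hd : 2 ≤ d)
    (h : ∀ v w, G.Adj v w → Nat.card (G.commonNeighbors v w) = μ) :
    globCc G = μ / (d - 1) := by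
  have hloc : ∀ v, locCc G v = μ / (d - 1) := fun v => by
    rw [locCc_eq_of_card_commonNeighbors G (hreg v ▸ hd) (h v), hreg v]
  rw [globCc, Finset.sum_congr rfl fun v _ => hloc v, Finset.sum_const, Finset.card_univ,
    nsmul_eq_mul, mul_div_cancel_left₀ _ (Nat.cast_ne_zero.mpr Fintype.card_ne_zero)]

end ClusteringOfEdgeRegular

section TensorProduct

variable (G : SimpleGraph α) (H : SimpleGraph β)

theorem tensorProdG_neighborSet (x : α × β) :
    (tensorProdG G H).neighborSet x = G.neighborSet x.1 ×ˢ H.neighborSet x.2 :=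
  rfl

theorem tensorProdG_commonNeighbors (x y : α × β) :
    (tensorProdG G H).commonNeighbors x y
      = G.commonNeighbors x.1 y.1 ×ˢ H.commonNeighbors x.2 y.2 := by
  ext z
  simp only [SimpleGraph.commonNeighbors, Set.mem_inter_iff, Set.mem_prod,
    SimpleGraph.mem_neighborSet, tensorProdG]
  tauto

theorem card_commonNeighbors_tensorProdG (x y : α × β) :
    Nat.card ((tensorProdG G H).commonNeighbors x y)
      = Nat.card (G.commonNeighbors x.1 y.1) * Nat.card (H.commonNeighbors x.2 y.2) := by
  rw [tensorProdG_commonNeighbors, Nat.card_congr (Equiv.Set.prod _ _), Nat.card_prod]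

theorem isRegularOfDegree_tensorProdG [Fintype α] [Fintype β] [DecidableRel G.Adj]
    [DecidableRel H.Adj] {dG dH : ℕ} (hG : G.IsRegularOfDegree dG) (hH : H.IsRegularOfDegree dH) :
    (tensorProdG G H).IsRegularOfDegree (dG * dH) := fun x => by
  rw [← SimpleGraph.card_neighborSet_eq_degree, ← Nat.card_eq_fintype_card,
    tensorProdG_neighborSet, Nat.card_congr (Equiv.Set.prod _ _), Nat.card_prod,
    Nat.card_eq_fintype_card, Nat.card_eq_fintype_card, SimpleGraph.card_neighborSet_eq_degree,
    SimpleGraph.card_neighborSet_eq_degree, hG x.1, hH x.2]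

end TensorProduct

theorem tensor_srg_globCc [Fintype α] [Fintype β] [Nonempty α] [Nonempty β]
    (G : SimpleGraph α) (H : SimpleGraph β) [DecidableRel G.Adj] [DecidableRel H.Adj]
    (n₁ n₂ dG dH μG₁ μG₂ μH₁ μH₂ : ℕ)
    (hG : G.IsSRGWith n₁ dG μG₁ μG₂) (hH : H.IsSRGWith n₂ dH μH₁ μH₂)
    (hdG : 2 ≤ dG) (hdH : 2 ≤ dH) :
    globCc (tensorProdG G H) = (μG₁ : ℝ) * (μH₁ : ℝ) / ((dG : ℝ) * (dH : ℝ) - 1) := by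
  have hcommon : ∀ x y, (tensorProdG G H).Adj x y →
      Nat.card ((tensorProdG G H).commonNeighbors x y) = μG₁ * μH₁ := fun x y hxy => by
    rw [card_commonNeighbors_tensorProdG, Nat.card_eq_fintype_card, Nat.card_eq_fintype_card,
      hG.of_adj _ _ hxy.1, hH.of_adj _ _ hxy.2]
  have hd : 2 ≤ dG * dH := le_trans hdG (Nat.le_mul_of_pos_right dG (by omega))
  exact_mod_cast globCc_eq_of_isRegularOfDegree _
    (isRegularOfDegree_tensorProdG G H hG.regular hH.regular) hd hcommon
end
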